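/- Let A be a cDFA over alphabet Σ with state set Q, start state q0 and transition function δ, and let D₁,…,Dₙ ⊆ Σ be nonempty finite domains. For every i ∈ [1,n] and ℓ ∈ Dᵢ, the maximum of cost(q0,σ) over all domain-consistent strings σ of length n with σᵢ = ℓ equals the maximum over all q ∈ Q with preMax(i−1,q) ≠ −∞ of preMax(i−1,q) + inc + sufMax(i+1,q′), where δ(q,ℓ) = (q′,inc). -/

import Mathlib

/-- A counter-DFA over state type `Q` and alphabet `σ`: a start state and a total
transition function returning the successor state and the counter increment. -/
structure CDFA (Q : Type*) (σ : Type*) where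
  q0 : Q
  δ : Q → σ → Q × ℕ

namespace CDFA

variable {Q σ : Type*}

/-- The state reached from `q` after consuming a string. -/
def run (A : CDFA Q σ) : Q → List σ → Q
  | q, [] => q
  | q, ℓ :: w => A.run (A.δ q ℓ).1 w

/-- The total counter increase from state `q` upon consuming a string. -/
def cost (A : CDFA Q σ) : Q → List σ → ℕ
  | _, [] => 0
  | q, ℓ :: w => (A.δ q ℓ).2 + A.cost (A.δ q ℓ).1 w

end CDFA

namespace CDFA

variable {Q σ : Type*}

/-- `preMin A D i hi q` : the minimum cost (in `ℕ ∪ {∞}`) of a domain-consistent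
prefix string of length `i` leading from the start state to state `q`
(`∞` if no such string reaches `q`). -/
noncomputable def preMin (A : CDFA Q σ) {n : ℕ} (D : Fin n → Finset σ)
    (i : ℕ) (hi : i ≤ n) (q : Q) : ℕ∞ :=
  sInf {c : ℕ∞ | ∃ s : Fin i → σ, (∀ j, s j ∈ D (Fin.castLE hi j)) ∧
    A.run A.q0 (List.ofFn s) = q ∧ (A.cost A.q0 (List.ofFn s) : ℕ∞) = c}

/-- `preMax A D i hi q` : the maximum cost (in `ℕ ∪ {−∞}`) of a domain-consistent
prefix string of length `i` leading from the start state to state `q`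
(`−∞` if no such string reaches `q`). -/
noncomputable def preMax (A : CDFA Q σ) {n : ℕ} (D : Fin n → Finset σ)
    (i : ℕ) (hi : i ≤ n) (q : Q) : WithBot ℕ :=
  sSup {c : WithBot ℕ | ∃ s : Fin i → σ, (∀ j, s j ∈ D (Fin.castLE hi j)) ∧
    A.run A.q0 (List.ofFn s) = q ∧ (A.cost A.q0 (List.ofFn s) : WithBot ℕ) = c}

/-- `sufMin A D i q` : the minimum cost of a domain-consistent suffix string for
positions `i, …, n−1` (0-based), starting from state `q`. -/
noncomputable def sufMin (A : CDFA Q σ) {n : ℕ} (D : Fin n → Finset σ)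
    (i : ℕ) (q : Q) : ℕ :=
  sInf {c : ℕ | ∃ s : Fin (n - i) → σ,
    (∀ j : Fin (n - i), s j ∈ D ⟨i + j.val, by have := j.isLt; omega⟩) ∧
    A.cost q (List.ofFn s) = c}

/-- `sufMax A D i q` : the maximum cost of a domain-consistent suffix string for
positions `i, …, n−1` (0-based), starting from state `q`. -/
noncomputable def sufMax (A : CDFA Q σ) {n : ℕ} (D : Fin n → Finset σ)
    (i : ℕ) (q : Q) : ℕ :=
  sSup {c : ℕ | ∃ s : Fin (n - i) → σ,
    (∀ j : Fin (n - i), s j ∈ D ⟨i + j.val, by have := j.isLt; omega⟩) ∧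
    A.cost q (List.ofFn s) = c}

end CDFA

/-!
A string with `ℓ` at position `i` is a prefix `p`, then `ℓ`, then a suffix `t`, and its cost is
`cost p + inc + cost t`, where `inc` and the state in which `t` is read depend on `p` only through
the state `q` that `p` reaches. So the maximum splits: over prefixes reaching `q` (this is
`preMax`), over suffixes read from the successor of `q` (this is `sufMax`), and finally over `q`.
Prefixes, suffixes and the strings they glue to correspond bijectively, through `List.ofFn`.
-/

namespace Fin

variable {α : Type*} {n : ℕ}

def drop (m : ℕ) (v : Fin n → α) : Fin (n - m) → α := fun j => v ⟨m + j, by omega⟩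

theorem ofFn_drop_eq_drop_ofFn (m : ℕ) (v : Fin n → α) :
    List.ofFn (drop m v) = (List.ofFn v).drop m :=
  List.ext_getElem (by simp) fun _ _ _ => by simp [drop]

theorem ofFn_eq_take_append_cons_drop (i : Fin n) (v : Fin n → α) :
    List.ofFn v = List.ofFn (take i i.isLt.le v) ++ v i :: List.ofFn (drop (i + 1) v) := by
  rw [ofFn_take_eq_take_ofFn, ofFn_drop_eq_drop_ofFn, ← List.getElem_ofFn (f := v) (by simp),
    ← List.drop_eq_getElem_cons, List.take_append_drop]

theorem forall_iff_take_and_drop (i : Fin n) (R : Fin n → Prop) :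
    (∀ j, R j) ↔ (∀ j, take i i.isLt.le R j) ∧ R i ∧ ∀ j, drop (i + 1) R j := by
  simpa only [List.forall_mem_ofFn_iff, List.forall_mem_append, List.forall_mem_cons]
    using (congrArg (∀ r ∈ ·, r) (ofFn_eq_take_append_cons_drop i R)).to_iff

theorem exists_take_eq_and_drop_eq (i : Fin n) (p : Fin i → α) (a : α)
    (t : Fin (n - (i + 1)) → α) :
    ∃ v, take i i.isLt.le v = p ∧ v i = a ∧ drop (i + 1) v = t := by
  set l := List.ofFn p ++ a :: List.ofFn t
  have hl : l.length = n := by simp [l]; omega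
  refine ⟨fun j => l[j.1], ?_⟩
  have h := ofFn_eq_take_append_cons_drop i fun j => l[j.1]
  have hofFn : (List.ofFn fun j : Fin n => l[j.1]) = l :=
    List.ext_getElem (by simp [hl]) (by simp)
  rw [hofFn] at h
  obtain ⟨hp, hat⟩ := List.append_inj h.symm (by simp)
  obtain ⟨ha, ht⟩ := List.cons.inj hat
  exact ⟨List.ofFn_injective hp, ha, List.ofFn_injective ht⟩

end Fin

namespace CDFA

variable {Q σ : Type*} (A : CDFA Q σ)

theorem cost_append (q : Q) (u v : List σ) :
    A.cost q (u ++ v) = A.cost q u + A.cost (A.run q u) v := by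
  induction u generalizing q with
  | nil => simp [cost, run]
  | cons a u ih => simp [cost, run, ih, Nat.add_assoc]

theorem cost_append_cons (q : Q) (u : List σ) (a : σ) (v : List σ) :
    A.cost q (u ++ a :: v) =
      A.cost q u + (A.δ (A.run q u) a).2 + A.cost (A.δ (A.run q u) a).1 v := by
  rw [cost_append, cost, Nat.add_assoc]

theorem finite_setOf_exists_forall_mem {ι β : Type*} [Finite ι] (E : ι → Finset σ)
    (P : (ι → σ) → Prop) (f : (ι → σ) → β) :
    {c | ∃ s, (∀ j, s j ∈ E j) ∧ P s ∧ f s = c}.Finite :=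
  ((Set.Finite.pi' fun j => (E j).finite_toSet).image f).subset
    fun _ ⟨s, hs, _, hc⟩ => ⟨s, hs, hc⟩

variable {n : ℕ} (D : Fin n → Finset σ)

theorem coe_cost_le_preMax {m : ℕ} (hm : m ≤ n) {p : Fin m → σ}
    (hp : ∀ j, p j ∈ D (Fin.castLE hm j)) :
    (A.cost A.q0 (List.ofFn p) : WithBot ℕ) ≤ A.preMax D m hm (A.run A.q0 (List.ofFn p)) :=
  le_csSup (finite_setOf_exists_forall_mem _ _ _).bddAbove ⟨p, hp, rfl, rfl⟩

theorem exists_preMax_eq_cost {m : ℕ} (hm : m ≤ n) {q : Q} (h : A.preMax D m hm q ≠ ⊥) :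
    ∃ p : Fin m → σ, (∀ j, p j ∈ D (Fin.castLE hm j)) ∧ A.run A.q0 (List.ofFn p) = q ∧
      A.preMax D m hm q = A.cost A.q0 (List.ofFn p) := by
  have hne : {c : WithBot ℕ | ∃ p : Fin m → σ, (∀ j, p j ∈ D (Fin.castLE hm j)) ∧
      A.run A.q0 (List.ofFn p) = q ∧ (A.cost A.q0 (List.ofFn p) : WithBot ℕ) = c}.Nonempty := by
    contrapose! h
    rw [preMax, h, csSup_empty]
  obtain ⟨p, hp, hq, hc⟩ := hne.csSup_mem (finite_setOf_exists_forall_mem _ _ _)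
  exact ⟨p, hp, hq, hc.symm⟩

theorem bddAbove_setOf_cost_drop (m : ℕ) (q : Q) :
    BddAbove {c | ∃ t : Fin (n - m) → σ, (∀ j, t j ∈ Fin.drop m D j) ∧
      A.cost q (List.ofFn t) = c} :=
  ((finite_setOf_exists_forall_mem (Fin.drop m D) (fun _ => True) _).subset
    (by rintro _ ⟨t, ht, rfl⟩; exact ⟨t, ht, trivial, rfl⟩)).bddAbove

theorem cost_le_sufMax (m : ℕ) (q : Q) {t : Fin (n - m) → σ}
    (ht : ∀ j, t j ∈ Fin.drop m D j) :
    A.cost q (List.ofFn t) ≤ A.sufMax D m q :=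
  le_csSup (A.bddAbove_setOf_cost_drop D m q) ⟨t, ht, rfl⟩

theorem exists_sufMax_eq_cost (m : ℕ) (q : Q) (hD : ∀ j, (Fin.drop m D j).Nonempty) :
    ∃ t : Fin (n - m) → σ, (∀ j, t j ∈ Fin.drop m D j) ∧
      A.sufMax D m q = A.cost q (List.ofFn t) := by
  have hmem := Nat.sSup_mem ?nonempty (A.bddAbove_setOf_cost_drop D m q)
  case nonempty => exact ⟨_, _, fun j => (hD j).choose_spec, rfl⟩
  obtain ⟨t, ht, hc⟩ := hmem
  exact ⟨t, ht, hc.symm⟩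

variable {D}

theorem exists_coe_cost_le_preMax_add_sufMax (i : Fin n) {s : Fin n → σ}
    (hs : ∀ j, s j ∈ D j) :
    ∃ q, A.preMax D i i.isLt.le q ≠ ⊥ ∧ (A.cost A.q0 (List.ofFn s) : WithBot ℕ) ≤
      A.preMax D i i.isLt.le q + (A.δ q (s i)).2 + A.sufMax D (i + 1) (A.δ q (s i)).1 := by
  obtain ⟨hp, -, ht⟩ := (Fin.forall_iff_take_and_drop i _).1 hs
  have hpre := A.coe_cost_le_preMax D i.isLt.le (p := Fin.take i i.isLt.le s) hp
  refine ⟨_, ne_bot_of_le_ne_bot WithBot.coe_ne_bot hpre, ?_⟩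
  rw [Fin.ofFn_eq_take_append_cons_drop i s, cost_append_cons]
  push_cast
  gcongr
  exact_mod_cast A.cost_le_sufMax D _ _ (t := Fin.drop (i + 1) s) ht

theorem exists_cost_eq_preMax_add_sufMax {i : Fin n} {ℓ : σ} (hℓ : ℓ ∈ D i)
    (hD : ∀ j, (Fin.drop (i + 1) D j).Nonempty) {q : Q} (hq : A.preMax D i i.isLt.le q ≠ ⊥) :
    ∃ s : Fin n → σ, (∀ j, s j ∈ D j) ∧ s i = ℓ ∧
      A.preMax D i i.isLt.le q + (A.δ q ℓ).2 + A.sufMax D (i + 1) (A.δ q ℓ).1 =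
        A.cost A.q0 (List.ofFn s) := by
  obtain ⟨p, hp, rfl, hpre⟩ := A.exists_preMax_eq_cost D _ hq
  obtain ⟨t, ht, hsuf⟩ :=
    A.exists_sufMax_eq_cost D (i + 1) (A.δ (A.run A.q0 (List.ofFn p)) ℓ).1 hD
  obtain ⟨s, rfl, rfl, rfl⟩ := Fin.exists_take_eq_and_drop_eq i p ℓ t
  refine ⟨s, (Fin.forall_iff_take_and_drop i _).2 ⟨hp, hℓ, ht⟩, rfl, ?_⟩
  rw [hpre, hsuf, Fin.ofFn_eq_take_append_cons_drop i s, cost_append_cons]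
  push_cast
  rfl

end CDFA

theorem max_cost_eq_sup_preMax_add_sufMax_general {Q σ : Type*} [Fintype Q]
    (A : CDFA Q σ) {n : ℕ} (D : Fin n → Finset σ)
    (hD : ∀ j, (D j).Nonempty) (i : Fin n) (ℓ : σ) (hℓ : ℓ ∈ D i) :
    ((sSup {c : ℕ | ∃ s : Fin n → σ, (∀ j, s j ∈ D j) ∧ s i = ℓ ∧
        A.cost A.q0 (List.ofFn s) = c} : ℕ) : WithBot ℕ) =
      (Finset.univ.filter (fun q : Q => A.preMax D i.val i.isLt.le q ≠ ⊥)).sup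
        (fun q => A.preMax D i.val i.isLt.le q + ((A.δ q ℓ).2 : WithBot ℕ) +
          (A.sufMax D (i.val + 1) (A.δ q ℓ).1 : WithBot ℕ)) := by
  have hS := (CDFA.finite_setOf_exists_forall_mem D (· i = ℓ)
    fun s => A.cost A.q0 (List.ofFn s)).bddAbove
  apply le_antisymm
  · obtain ⟨s₀, hs₀⟩ : ∃ s : Fin n → σ, ∀ j, s j ∈ D j :=
      ⟨_, fun j => (hD j).choose_spec⟩
    have hmax := Nat.sSup_mem ?nonempty hS
    case nonempty =>
      exact ⟨_, Function.update s₀ i ℓ,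
        fun j => by rcases eq_or_ne j i with rfl | h <;> simp [*], by simp, rfl⟩
    obtain ⟨s, hs, rfl, hc⟩ := hmax
    obtain ⟨q, hq, hle⟩ := A.exists_coe_cost_le_preMax_add_sufMax i hs
    rw [← hc]
    exact Finset.le_sup_of_le (Finset.mem_filter.2 ⟨Finset.mem_univ q, hq⟩) hle
  · refine Finset.sup_le fun q hq => ?_
    obtain ⟨s, hs, hsi, hc⟩ :=
      A.exists_cost_eq_preMax_add_sufMax hℓ (fun j => hD _) (Finset.mem_filter.1 hq).2
    rw [hc]
    exact_mod_cast le_csSup hS ⟨s, hs, hsi, rfl⟩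

/-- The maximum cost over all domain-consistent strings of length `n` whose `i`-th
symbol is `ℓ` equals the maximum, over all states `q` with `preMax(i−1,q) ≠ −∞`, of
`preMax(i−1,q) + inc + sufMax(i+1,q′)` where `δ(q,ℓ) = (q′,inc)` (positions 0-based). -/
theorem max_cost_eq_sup_preMax_add_sufMax {Q σ : Type*} [Fintype Q] [Fintype σ]
    [DecidableEq Q] (A : CDFA Q σ) {n : ℕ} (D : Fin n → Finset σ)
    (hD : ∀ j, (D j).Nonempty) (i : Fin n) (ℓ : σ) (hℓ : ℓ ∈ D i) :
    ((sSup {c : ℕ | ∃ s : Fin n → σ, (∀ j, s j ∈ D j) ∧ s i = ℓ ∧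
        A.cost A.q0 (List.ofFn s) = c} : ℕ) : WithBot ℕ) =
      (Finset.univ.filter (fun q : Q => A.preMax D i.val i.isLt.le q ≠ ⊥)).sup
        (fun q => A.preMax D i.val i.isLt.le q + ((A.δ q ℓ).2 : WithBot ℕ) +
          (A.sufMax D (i.val + 1) (A.δ q ℓ).1 : WithBot ℕ)) :=
  max_cost_eq_sup_preMax_add_sufMax_general A D hD i ℓ hℓ
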